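/- Let 𝕂 = ℝ or ℂ, suppose 𝒞 is nonempty and compact with constants R, K, let C ∈ S^{n×n} be the cost matrix, and let Y ∈ ℳ_k be an (ε_g,ε_H)-SOSP for some ε_g, ε_H ≥ 0. Then 0 ≤ ⟨CY, Y⟩ − f★ ≤ (ε_H + K·(2+KR)²·‖C‖_op·σ_k(Y)²)·R + (ε_g/2)·√R, where f★ = min_{X ∈ 𝒞} ⟨C, X⟩ and σ_k(Y) is the k-th (smallest) singular value of Y (taken to be 0 if k > n). -/

import Mathlib

open scoped Matrix BigOperators ComplexOrder
open MeasureTheory ProbabilityTheory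

noncomputable section

namespace SmoothedBM

variable {𝕂 : Type*} [RCLike 𝕂]

/-- Real Frobenius inner product `⟨A,B⟩ = Re tr(Aᴴ B)`. -/
def finner {n k : ℕ} (A B : Matrix (Fin n) (Fin k) 𝕂) : ℝ :=
  RCLike.re (Matrix.trace (Aᴴ * B))

/-- Frobenius norm. -/
def fnorm {n k : ℕ} (A : Matrix (Fin n) (Fin k) 𝕂) : ℝ :=
  Real.sqrt (finner A A)

/-- Spectral (operator) norm: the largest singular value, i.e. the square root of the
largest eigenvalue of `Aᴴ * A`. -/
def opNorm {n k : ℕ} (A : Matrix (Fin n) (Fin k) 𝕂) : ℝ :=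
  ⨆ i, Real.sqrt ((Matrix.isHermitian_conjTranspose_mul_self A).eigenvalues i)

/-- The `k`-th (smallest) singular value of an `n × k` matrix: the square root of the
smallest eigenvalue of `Yᴴ * Y`.  (It is `0` when `k > n`.) -/
def sigmaLast {n k : ℕ} (Y : Matrix (Fin n) (Fin k) 𝕂) : ℝ :=
  Real.sqrt (⨅ i, (Matrix.isHermitian_conjTranspose_mul_self Y).eigenvalues i)

/-- Squared singular values of an `n × n` matrix, sorted in increasing order
(eigenvalues of `Aᴴ * A`, sorted). -/
def svSqAsc {n : ℕ} (A : Matrix (Fin n) (Fin n) 𝕂) : Fin n → ℝ := fun i =>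
  (Matrix.isHermitian_conjTranspose_mul_self A).eigenvalues
    (Tuple.sort ((Matrix.isHermitian_conjTranspose_mul_self A).eigenvalues) i)

/-- Sum of the squares of the `k` smallest singular values of an `n × n` matrix. -/
def sumSqSmallestSV {n : ℕ} (k : ℕ) (A : Matrix (Fin n) (Fin n) 𝕂) : ℝ :=
  ∑ i : Fin n, if (i : ℕ) < k then svSqAsc A i else 0

open Classical in
/-- Smallest eigenvalue of a self-adjoint matrix (junk value `0` if not self-adjoint). -/
def lambdaMin {n : ℕ} (A : Matrix (Fin n) (Fin n) 𝕂) : ℝ :=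
  if hA : A.IsHermitian then ⨅ i, hA.eigenvalues i else 0

open Classical in
/-- Number of eigenvalues of a self-adjoint matrix lying in a set `I ⊆ ℝ`
(junk value `0` if not self-adjoint). -/
def eigCountIn {n : ℕ} (A : Matrix (Fin n) (Fin n) 𝕂) (I : Set ℝ) : ℕ :=
  if hA : A.IsHermitian then (Finset.univ.filter fun i => hA.eigenvalues i ∈ I).card else 0

variable {n m k : ℕ}

/-- The constraint map `𝒜(Z)ᵢ = ⟨Aᵢ, Z⟩`. -/
def calA (A : Fin m → Matrix (Fin n) (Fin n) 𝕂) (Z : Matrix (Fin n) (Fin n) 𝕂) :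
    Fin m → ℝ := fun i => finner (A i) Z

/-- The adjoint map `𝒜*(μ) = ∑ᵢ μᵢ Aᵢ`. -/
def calAstar (A : Fin m → Matrix (Fin n) (Fin n) 𝕂) (μ : Fin m → ℝ) :
    Matrix (Fin n) (Fin n) 𝕂 := ∑ i, (μ i : 𝕂) • A i

/-- The SDP feasible set `𝒞`. -/
def SDPSet (A : Fin m → Matrix (Fin n) (Fin n) 𝕂) (b : Fin m → ℝ) :
    Set (Matrix (Fin n) (Fin n) 𝕂) :=
  {X | X.PosSemidef ∧ ∀ i, finner (A i) X = b i}

/-- The factorized feasible set `ℳ_k`. -/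
def FactSet (A : Fin m → Matrix (Fin n) (Fin n) 𝕂) (b : Fin m → ℝ) (k : ℕ) :
    Set (Matrix (Fin n) (Fin k) 𝕂) :=
  {Y | ∀ i, finner (A i) (Y * Yᴴ) = b i}

/-- The Gram matrix `G(Y)ᵢⱼ = ⟨AᵢY, AⱼY⟩`. -/
def gram (A : Fin m → Matrix (Fin n) (Fin n) 𝕂) (Y : Matrix (Fin n) (Fin k) 𝕂) :
    Matrix (Fin m) (Fin m) ℝ :=
  Matrix.of fun i j => finner (A i * Y) (A j * Y)

/-- The four Moore–Penrose identities. -/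
def IsMoorePenrose {m : ℕ} (G H : Matrix (Fin m) (Fin m) ℝ) : Prop :=
  G * H * G = G ∧ H * G * H = H ∧ (G * H)ᵀ = G * H ∧ (H * G)ᵀ = H * G

open Classical in
/-- The Moore–Penrose pseudo-inverse (the unique matrix satisfying the four
Moore–Penrose identities; junk value `0` if none exists). -/
def pinv {m : ℕ} (G : Matrix (Fin m) (Fin m) ℝ) : Matrix (Fin m) (Fin m) ℝ :=
  if h : ∃ H, IsMoorePenrose G H then h.choose else 0

/-- The matrix `S(Y) = C − 𝒜*(G(Y)† 𝒜(C Y Yᴴ))`. -/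
def Smat (A : Fin m → Matrix (Fin n) (Fin n) 𝕂) (C : Matrix (Fin n) (Fin n) 𝕂)
    (Y : Matrix (Fin n) (Fin k) 𝕂) : Matrix (Fin n) (Fin n) 𝕂 :=
  C - calAstar A (pinv (gram A Y) *ᵥ calA A (C * (Y * Yᴴ)))

/-- `Y` is an `εg`-approximate first-order stationary point of the factorized problem. -/
def IsFOSP (A : Fin m → Matrix (Fin n) (Fin n) 𝕂) (b : Fin m → ℝ)
    (C : Matrix (Fin n) (Fin n) 𝕂) (Y : Matrix (Fin n) (Fin k) 𝕂) (εg : ℝ) : Prop :=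
  Y ∈ FactSet A b k ∧ fnorm ((2 : 𝕂) • (Smat A C Y * Y)) ≤ εg

/-- `Y` is an `(εg, εH)`-approximate second-order stationary point of the factorized problem. -/
def IsSOSP (A : Fin m → Matrix (Fin n) (Fin n) 𝕂) (b : Fin m → ℝ)
    (C : Matrix (Fin n) (Fin n) 𝕂) (Y : Matrix (Fin n) (Fin k) 𝕂) (εg εH : ℝ) : Prop :=
  IsFOSP A b C Y εg ∧
    ∀ V : Matrix (Fin n) (Fin k) 𝕂, (∀ i, finner (A i * Y) V = 0) →
      -εH * (fnorm V) ^ 2 ≤ finner V (Smat A C Y * V)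

/-- The smooth-manifold assumption (Assumption 1). -/
def SmoothAssumption (A : Fin m → Matrix (Fin n) (Fin n) 𝕂) (b : Fin m → ℝ) : Prop :=
  ∀ k' : ℕ, k' ≤ n → (FactSet A b k').Nonempty →
    (∀ Y ∈ FactSet A b k', LinearIndependent ℝ fun i => A i * Y) ∨
    (∃ U : Set (Matrix (Fin n) (Fin k') 𝕂), IsOpen U ∧ FactSet A b k' ⊆ U ∧
      ∃ d : ℕ, ∀ Y ∈ U,
        Module.finrank ℝ (Submodule.span ℝ (Set.range fun i => A i * Y)) = d)

/-- A real Gaussian Wigner matrix with variance `σ²`: a random real symmetric matrix whose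
on-and-above-diagonal entries are independent centered Gaussians `N(0, σ²)`. -/
structure IsRealWigner {Ω : Type*} [MeasurableSpace Ω] (μ : Measure Ω) {n : ℕ} (σ : ℝ)
    (W : Ω → Matrix (Fin n) (Fin n) ℝ) : Prop where
  symm : ∀ ω, (W ω)ᵀ = W ω
  meas : ∀ i j, Measurable fun ω => W ω i j
  indep : iIndepFun (m := fun _ : {p : Fin n × Fin n // p.1 ≤ p.2} => (inferInstance : MeasurableSpace ℝ))
    (fun p ω => W ω p.val.1 p.val.2) μ
  gauss : ∀ i j : Fin n, i ≤ j →
    Measure.map (fun ω => W ω i j) μ = gaussianReal 0 ⟨σ ^ 2, sq_nonneg σ⟩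

/-- The independent real coordinates of a complex Hermitian random matrix:
diagonal entries, and real/imaginary parts of the above-diagonal entries. -/
def wignerParts {Ω : Type*} {n : ℕ} (W : Ω → Matrix (Fin n) (Fin n) ℂ) :
    (Fin n ⊕ {p : Fin n × Fin n // p.1 < p.2} × Bool) → Ω → ℝ
  | Sum.inl i => fun ω => (W ω i i).re
  | Sum.inr (p, false) => fun ω => (W ω p.val.1 p.val.2).re
  | Sum.inr (p, true) => fun ω => (W ω p.val.1 p.val.2).im

/-- A complex Gaussian Wigner matrix with variance `σ²`: a random Hermitian matrix whose
on-and-above-diagonal entries are independent, the diagonal entries being real `N(0, σ²)` and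
the above-diagonal entries having independent `N(0, σ²/2)` real and imaginary parts. -/
structure IsComplexWigner {Ω : Type*} [MeasurableSpace Ω] (μ : Measure Ω) {n : ℕ} (σ : ℝ)
    (W : Ω → Matrix (Fin n) (Fin n) ℂ) : Prop where
  herm : ∀ ω, (W ω).IsHermitian
  meas : ∀ i j, Measurable fun ω => W ω i j
  indep : iIndepFun (m := fun _ : Fin n ⊕ {p : Fin n × Fin n // p.1 < p.2} × Bool => (inferInstance : MeasurableSpace ℝ))
    (wignerParts W) μ
  diag : ∀ i : Fin n,
    Measure.map (fun ω => (W ω i i).re) μ = gaussianReal 0 ⟨σ ^ 2, sq_nonneg σ⟩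
  off_re : ∀ i j : Fin n, i < j →
    Measure.map (fun ω => (W ω i j).re) μ = gaussianReal 0 ⟨σ ^ 2 / 2, by positivity⟩
  off_im : ∀ i j : Fin n, i < j →
    Measure.map (fun ω => (W ω i j).im) μ = gaussianReal 0 ⟨σ ^ 2 / 2, by positivity⟩

/-!
Write `S = S(Y) = C - 𝒜*(λ)`. On `𝒞` the constraints fix `⟨𝒜*(λ), X⟩`, so
`⟨C, YY*⟩ - ⟨C, X⟩ = ⟨S, YY*⟩ - ⟨S, X⟩`. First-order stationarity bounds
`⟨S, YY*⟩ = ⟨SY, Y⟩ ≤ ‖SY‖ ‖Y‖ ≤ (ε_g / 2) √R`, and it remains to show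
`λ_min(S) ≥ -c` with `c = ε_H + K (2 + KR)² ‖C‖_op σ_k(Y)²`, for then `⟨S, X⟩ ≥ -c tr X ≥ -c R`.

For a vector `x`, let `z` be a unit eigenvector of `Y*Y` for `σ_k(Y)²` and test the second-order
condition on the tangent part `W - D` of `W = x z*`. The normal part is `D = 𝒜*(μ) Y` with
`‖𝒜*(μ)‖ ≤ K ‖WY*‖ = K σ_k ‖x‖`, and since `W z z* = W` the cross term only sees `D z z*`, of
size `K σ_k² ‖x‖`. With `‖S‖_op ≤ ‖C‖_op (1 + KR)` the two correction terms cost at most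
`K σ_k² ‖C‖_op (1 + KR) (2 + KR) ‖x‖²`.
-/

def flatten {n k : ℕ} (A : Matrix (Fin n) (Fin k) 𝕂) : EuclideanSpace 𝕂 (Fin n × Fin k) :=
  WithLp.toLp 2 fun p => A p.1 p.2

section Frobenius

variable {l : ℕ}

theorem finner_eq_re_inner (A B : Matrix (Fin n) (Fin k) 𝕂) :
    finner A B = RCLike.re (inner 𝕂 (flatten A) (flatten B)) := by
  simp only [finner, Matrix.trace, Matrix.diag, Matrix.mul_apply, Matrix.conjTranspose_apply,
    flatten, EuclideanSpace.inner_toLp_toLp, dotProduct, Fintype.sum_prod_type, Pi.star_apply,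
    RCLike.star_def]
  rw [Finset.sum_comm]
  simp only [mul_comm]

theorem fnorm_nonneg (A : Matrix (Fin n) (Fin k) 𝕂) : 0 ≤ fnorm A := Real.sqrt_nonneg _

theorem fnorm_eq_norm_flatten (A : Matrix (Fin n) (Fin k) 𝕂) : fnorm A = ‖flatten A‖ := by
  rw [fnorm, finner_eq_re_inner, inner_self_eq_norm_sq (𝕜 := 𝕂), Real.sqrt_sq (norm_nonneg _)]

section

open scoped Matrix.Norms.Frobenius

theorem fnorm_eq_frobenius_norm (A : Matrix (Fin n) (Fin k) 𝕂) : fnorm A = ‖A‖ := by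
  rw [fnorm_eq_norm_flatten, EuclideanSpace.norm_eq, Matrix.frobenius_norm_def,
    Real.sqrt_eq_rpow, Fintype.sum_prod_type]
  simp only [flatten, PiLp.toLp_apply, Real.rpow_two]

theorem fnorm_mul_le (M : Matrix (Fin n) (Fin l) 𝕂) (N : Matrix (Fin l) (Fin k) 𝕂) :
    fnorm (M * N) ≤ fnorm M * fnorm N := by
  simpa only [fnorm_eq_frobenius_norm] using Matrix.frobenius_norm_mul M N

theorem fnorm_conjTranspose (A : Matrix (Fin n) (Fin k) 𝕂) : fnorm Aᴴ = fnorm A := by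
  simp only [fnorm_eq_frobenius_norm, Matrix.frobenius_norm_conjTranspose]

theorem fnorm_sub_le (A B : Matrix (Fin n) (Fin k) 𝕂) : fnorm (A - B) ≤ fnorm A + fnorm B := by
  simpa only [fnorm_eq_frobenius_norm] using norm_sub_le A B

theorem fnorm_pos {A : Matrix (Fin n) (Fin k) 𝕂} (hA : A ≠ 0) : 0 < fnorm A := by
  rw [fnorm_eq_frobenius_norm]
  exact norm_pos_iff.mpr hA

theorem fnorm_two_smul (A : Matrix (Fin n) (Fin k) 𝕂) :
    fnorm ((2 : 𝕂) • A) = 2 * fnorm A := by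
  simp only [fnorm_eq_frobenius_norm, norm_smul, RCLike.norm_ofNat]

end

theorem finner_comm (A B : Matrix (Fin n) (Fin k) 𝕂) : finner A B = finner B A := by
  rw [finner, finner, ← Matrix.conjTranspose_conjTranspose B, ← Matrix.conjTranspose_mul,
    Matrix.trace_conjTranspose, Matrix.conjTranspose_conjTranspose, RCLike.star_def,
    RCLike.conj_re]

theorem finner_add_right (A B C : Matrix (Fin n) (Fin k) 𝕂) :
    finner A (B + C) = finner A B + finner A C := by
  simp only [finner, Matrix.mul_add, Matrix.trace_add, map_add]

theorem finner_add_left (A B C : Matrix (Fin n) (Fin k) 𝕂) :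
    finner (A + B) C = finner A C + finner B C := by
  simp only [finner, Matrix.conjTranspose_add, Matrix.add_mul, Matrix.trace_add, map_add]

theorem finner_sub_right (A B C : Matrix (Fin n) (Fin k) 𝕂) :
    finner A (B - C) = finner A B - finner A C := by
  simp only [finner, Matrix.mul_sub, Matrix.trace_sub, map_sub]

theorem finner_sub_left (A B C : Matrix (Fin n) (Fin k) 𝕂) :
    finner (A - B) C = finner A C - finner B C := by
  simp only [finner, Matrix.conjTranspose_sub, Matrix.sub_mul, Matrix.trace_sub, map_sub]

theorem finner_sum_smul_left {ι : Type*} (s : Finset ι) (μ : ι → ℝ)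
    (M : ι → Matrix (Fin n) (Fin k) 𝕂) (B : Matrix (Fin n) (Fin k) 𝕂) :
    finner (∑ i ∈ s, (μ i : 𝕂) • M i) B = ∑ i ∈ s, μ i * finner (M i) B := by
  simp [finner, Matrix.conjTranspose_sum, Matrix.sum_mul, Matrix.trace_sum, Matrix.trace_smul,
    RCLike.smul_re]

theorem finner_algebraMap_left (c : ℝ) (X : Matrix (Fin n) (Fin n) 𝕂) :
    finner (algebraMap ℝ _ c) X = c * RCLike.re X.trace := by
  simp [finner, Algebra.algebraMap_eq_smul_one, Matrix.trace_smul, RCLike.smul_re]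

theorem finner_self_nonneg (A : Matrix (Fin n) (Fin k) 𝕂) : 0 ≤ finner A A := by
  rw [finner_eq_re_inner]
  exact inner_self_nonneg (𝕜 := 𝕂)

theorem fnorm_sq (A : Matrix (Fin n) (Fin k) 𝕂) : fnorm A ^ 2 = finner A A :=
  Real.sq_sqrt (finner_self_nonneg A)

theorem fnorm_sq_eq_re_trace (A : Matrix (Fin n) (Fin k) 𝕂) :
    fnorm A ^ 2 = RCLike.re (A * Aᴴ).trace := by
  rw [fnorm_sq, finner, Matrix.trace_mul_comm]

theorem abs_finner_le (A B : Matrix (Fin n) (Fin k) 𝕂) : |finner A B| ≤ fnorm A * fnorm B := by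
  rw [finner_eq_re_inner, fnorm_eq_norm_flatten, fnorm_eq_norm_flatten]
  exact (RCLike.abs_re_le_norm _).trans (norm_inner_le_norm _ _)

theorem finner_mul_left (M : Matrix (Fin n) (Fin l) 𝕂) (N : Matrix (Fin l) (Fin k) 𝕂)
    (P : Matrix (Fin n) (Fin k) 𝕂) : finner (M * N) P = finner N (Mᴴ * P) := by
  rw [finner, finner, Matrix.conjTranspose_mul, Matrix.mul_assoc]

theorem finner_mul_right (M : Matrix (Fin n) (Fin l) 𝕂) (N : Matrix (Fin l) (Fin k) 𝕂)
    (P : Matrix (Fin n) (Fin k) 𝕂) : finner (M * N) P = finner M (P * Nᴴ) := by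
  rw [finner, finner, Matrix.conjTranspose_mul, Matrix.trace_mul_cycle, Matrix.trace_mul_comm]

theorem finner_sub_mul_sub {S : Matrix (Fin n) (Fin n) 𝕂} (hS : S.IsHermitian)
    (W D : Matrix (Fin n) (Fin k) 𝕂) :
    finner (W - D) (S * (W - D)) =
      finner W (S * W) - 2 * finner D (S * W) + finner D (S * D) := by
  have hsymm : finner W (S * D) = finner D (S * W) := by
    rw [finner_comm, finner_mul_left, hS.eq]
  simp only [Matrix.mul_sub, finner_sub_left, finner_sub_right, hsymm]
  ring

theorem finner_vecMulVec_star {z : Fin k → 𝕂} (hz : star z ⬝ᵥ z = 1) (x y : Fin n → 𝕂) :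
    finner (Matrix.vecMulVec x (star z)) (Matrix.vecMulVec y (star z)) =
      RCLike.re (star x ⬝ᵥ y) := by
  rw [finner, Matrix.conjTranspose_vecMulVec, star_star, Matrix.vecMulVec_mul_vecMulVec,
    Matrix.trace_vecMulVec, dotProduct_smul, dotProduct_comm z, hz, smul_eq_mul, mul_one]

end Frobenius

theorem opNorm_nonneg (C : Matrix (Fin n) (Fin k) 𝕂) : 0 ≤ opNorm C :=
  Real.iSup_nonneg fun _ => Real.sqrt_nonneg _

section Loewner

open scoped MatrixOrder

theorem finner_nonneg_of_posSemidef {P X : Matrix (Fin n) (Fin n) 𝕂} (hP : P.PosSemidef)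
    (hX : X.PosSemidef) : 0 ≤ finner P X := by
  obtain ⟨B, rfl⟩ := CStarAlgebra.nonneg_iff_eq_star_mul_self.mp hX.nonneg
  rw [finner, hP.isHermitian.eq, ← Matrix.mul_assoc, Matrix.trace_mul_comm, ← Matrix.mul_assoc,
    Matrix.star_eq_conjTranspose]
  exact (RCLike.nonneg_iff.mp (hP.mul_mul_conjTranspose_same B).trace_nonneg).1

theorem posSemidef_sub_algebraMap {S : Matrix (Fin n) (Fin n) 𝕂} (hS : S.IsHermitian) {c : ℝ}
    (h : ∀ x, c * RCLike.re (star x ⬝ᵥ x) ≤ RCLike.re (star x ⬝ᵥ S *ᵥ x)) :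
    (S - algebraMap ℝ _ c).PosSemidef := by
  have hH : (S - algebraMap ℝ _ c).IsHermitian :=
    hS.sub (IsSelfAdjoint.algebraMap _ (IsSelfAdjoint.all c))
  refine Matrix.PosSemidef.of_dotProduct_mulVec_nonneg hH fun x => RCLike.nonneg_iff.mpr
    ⟨?_, hH.im_star_dotProduct_mulVec_self x⟩
  simpa [Matrix.sub_mulVec, Algebra.algebraMap_eq_smul_one, Matrix.smul_mulVec, RCLike.smul_re]
    using h x

theorem mul_re_trace_le_finner {S X : Matrix (Fin n) (Fin n) 𝕂} (hS : S.IsHermitian) {c : ℝ}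
    (h : ∀ x, c * RCLike.re (star x ⬝ᵥ x) ≤ RCLike.re (star x ⬝ᵥ S *ᵥ x))
    (hX : X.PosSemidef) : c * RCLike.re X.trace ≤ finner S X := by
  have := finner_nonneg_of_posSemidef (posSemidef_sub_algebraMap hS h) hX
  rw [finner_sub_left, finner_algebraMap_left] at this
  linarith

theorem eigenvalues_le_opNorm_sq (C : Matrix (Fin n) (Fin n) 𝕂) (i : Fin n) :
    (Matrix.isHermitian_conjTranspose_mul_self C).eigenvalues i ≤ opNorm C ^ 2 := by
  rw [← Real.sq_sqrt (Matrix.eigenvalues_conjTranspose_mul_self_nonneg C i)]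
  gcongr
  exact le_ciSup (f := fun j => √((Matrix.isHermitian_conjTranspose_mul_self C).eigenvalues j))
    (Set.finite_range _).bddAbove i

theorem posSemidef_algebraMap_opNorm_sq_sub (C : Matrix (Fin n) (Fin n) 𝕂) :
    (algebraMap ℝ _ (opNorm C ^ 2) - Cᴴ * C).PosSemidef := by
  have hC := Matrix.isHermitian_conjTranspose_mul_self C
  refine Matrix.nonneg_iff_posSemidef.mp
    (sub_nonneg.mpr (le_algebraMap_of_spectrum_le ?_ hC.isSelfAdjoint))
  rw [hC.spectrum_real_eq_range_eigenvalues]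
  rintro _ ⟨i, rfl⟩
  exact eigenvalues_le_opNorm_sq C i

theorem fnorm_mul_le_opNorm (C : Matrix (Fin n) (Fin n) 𝕂) (N : Matrix (Fin n) (Fin k) 𝕂) :
    fnorm (C * N) ≤ opNorm C * fnorm N := by
  have h := finner_nonneg_of_posSemidef (posSemidef_algebraMap_opNorm_sq_sub C)
    (Matrix.posSemidef_self_mul_conjTranspose N)
  rw [finner_sub_left, finner_algebraMap_left, ← fnorm_sq_eq_re_trace, ← finner_mul_right,
    Matrix.mul_assoc, finner_mul_left, Matrix.conjTranspose_conjTranspose, ← fnorm_sq,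
    sub_nonneg, ← mul_pow] at h
  exact (pow_le_pow_iff_left₀ (fnorm_nonneg _) (mul_nonneg (opNorm_nonneg C) (fnorm_nonneg N))
    two_ne_zero).mp h

end Loewner

theorem exists_fnorm_mul_vecMulVec_eq_sigmaLast (hk : 0 < k) (Y : Matrix (Fin n) (Fin k) 𝕂) :
    ∃ z : Fin k → 𝕂, star z ⬝ᵥ z = 1 ∧
      fnorm (Y * Matrix.vecMulVec z (star z)) = sigmaLast Y := by
  have : Nonempty (Fin k) := ⟨⟨0, hk⟩⟩
  set hY := Matrix.isHermitian_conjTranspose_mul_self Y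
  obtain ⟨i, hi⟩ := exists_eq_ciInf_of_finite (f := hY.eigenvalues)
  set z : Fin k → 𝕂 := (hY.eigenvectorBasis i).ofLp with hz_def
  have hz : star z ⬝ᵥ z = 1 := by
    rw [dotProduct_comm, ← EuclideanSpace.inner_eq_star_dotProduct, inner_self_eq_norm_sq_to_K,
      hY.eigenvectorBasis.orthonormal.1 i]
    simp
  refine ⟨z, hz, ?_⟩
  rw [sigmaLast, ← hi, fnorm, Matrix.mul_vecMulVec, finner_vecMulVec_star hz, Matrix.star_mulVec,
    ← Matrix.dotProduct_mulVec, Matrix.mulVec_mulVec, hY.mulVec_eigenvectorBasis i, ← hz_def,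
    dotProduct_smul, hz, RCLike.real_smul_eq_coe_mul, mul_one, RCLike.ofReal_re]

theorem exists_gram_mulVec_eq_inner {E : Type*} [NormedAddCommGroup E] [InnerProductSpace ℝ E]
    (v : Fin m → E) (w : E) : ∃ u, Matrix.gram ℝ v *ᵥ u = fun i => inner ℝ (v i) w := by
  have : FiniteDimensional ℝ (Submodule.span ℝ (Set.range v)) :=
    FiniteDimensional.span_of_finite ℝ (Set.finite_range v)
  obtain ⟨y, hy, z, hz, rfl⟩ := (Submodule.span ℝ (Set.range v)).exists_add_mem_mem_orthogonal w
  obtain ⟨u, rfl⟩ := Submodule.mem_span_range_iff_exists_fun ℝ |>.mp hy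
  refine ⟨u, funext fun i => ?_⟩
  have hz_i : inner ℝ (v i) z = 0 :=
    (Submodule.mem_orthogonal _ _).mp hz _ (Submodule.subset_span (Set.mem_range_self i))
  simp [Matrix.mulVec, dotProduct, Matrix.gram, inner_add_right, inner_sum, inner_smul_right,
    hz_i, mul_comm]

theorem isMoorePenrose_cfc_inv {G : Matrix (Fin m) (Fin m) ℝ} (hG : G.IsHermitian) :
    IsMoorePenrose G (cfc (fun x : ℝ => x⁻¹) G) := by
  have hsa : IsSelfAdjoint G := hG
  have hfin := Matrix.finite_real_spectrum (A := G)
  have hmul : ∀ f g : ℝ → ℝ, cfc f G * cfc g G = cfc (fun x => f x * g x) G := fun f g =>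
    (cfc_mul f g G (hfin.continuousOn _) (hfin.continuousOn _)).symm
  have hid : cfc (fun x : ℝ => x) G = G := cfc_id' ℝ G
  have hT : ∀ f : ℝ → ℝ, (cfc f G)ᵀ = cfc f G := fun f =>
    (Matrix.conjTranspose_eq_transpose_of_trivial _).symm.trans (cfc_predicate f G)
  have hinv : ∀ x : ℝ, x⁻¹ * x * x⁻¹ = x⁻¹ := fun x => by
    simpa using mul_inv_mul_cancel x⁻¹
  refine ⟨?_, ?_, ?_, ?_⟩
  · nth_rw 1 [← hid]; nth_rw 3 [← hid]
    rw [hmul, hmul]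
    simp only [mul_inv_mul_cancel, hid]
  · nth_rw 2 [← hid]
    rw [hmul, hmul]
    simp only [hinv]
  · simpa only [← hmul, hid] using hT fun x => x * x⁻¹
  · simpa only [← hmul, hid] using hT fun x => x⁻¹ * x

theorem mul_pinv_mul_self {G : Matrix (Fin m) (Fin m) ℝ} (hG : G.IsHermitian) :
    G * pinv G * G = G := by
  have hex : ∃ H, IsMoorePenrose G H := ⟨_, isMoorePenrose_cfc_inv hG⟩
  rw [pinv, dif_pos hex]
  exact hex.choose_spec.1

section NormalSpace

variable (A : Fin m → Matrix (Fin n) (Fin n) 𝕂) (Y W : Matrix (Fin n) (Fin k) 𝕂)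

theorem gram_isHermitian : (gram A Y).IsHermitian :=
  Matrix.IsHermitian.ext fun i j => by simp [gram, finner_comm]

theorem exists_gram_mulVec_eq : ∃ u, gram A Y *ᵥ u = fun i => finner (A i * Y) W := by
  let := InnerProductSpace.rclikeToReal 𝕂 (EuclideanSpace 𝕂 (Fin n × Fin k))
  simpa [gram, Matrix.gram, finner_eq_re_inner, real_inner_eq_re_inner] using
    exists_gram_mulVec_eq_inner (fun i => flatten (A i * Y)) (flatten W)

theorem finner_calAstar_left (μ : Fin m → ℝ) (X : Matrix (Fin n) (Fin n) 𝕂) :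
    finner (calAstar A μ) X = ∑ i, μ i * finner (A i) X :=
  finner_sum_smul_left _ _ _ _

theorem finner_calAstar_mul_left (μ : Fin m → ℝ) :
    finner (calAstar A μ * Y) W = ∑ i, μ i * finner (A i * Y) W := by
  simp only [finner_mul_right _ Y, finner_calAstar_left]

/-- The orthogonal projection of `W` onto `span {Aᵢ Y}`, the normal space of `ℳ_k` at `Y`. -/
def normalPart : Matrix (Fin n) (Fin k) 𝕂 :=
  calAstar A (pinv (gram A Y) *ᵥ calA A (W * Yᴴ)) * Y

theorem finner_normalPart (i : Fin m) :
    finner (A i * Y) (normalPart A Y W) = finner (A i * Y) W := by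
  set μ := pinv (gram A Y) *ᵥ calA A (W * Yᴴ)
  have hc : calA A (W * Yᴴ) = fun i => finner (A i * Y) W :=
    funext fun i => (finner_mul_right _ _ _).symm
  obtain ⟨u, hu⟩ := exists_gram_mulVec_eq A Y W
  have hsolve : gram A Y *ᵥ μ = fun i => finner (A i * Y) W :=
    calc gram A Y *ᵥ μ = (gram A Y * pinv (gram A Y) * gram A Y) *ᵥ u := by
          simp only [μ, hc, ← hu, Matrix.mulVec_mulVec, Matrix.mul_assoc]
      _ = _ := by rw [mul_pinv_mul_self (gram_isHermitian A Y), hu]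
  have h := congrFun hsolve i
  simp only [Matrix.mulVec, dotProduct, gram, Matrix.of_apply] at h
  rw [normalPart, finner_comm, finner_calAstar_mul_left, ← h]
  exact Finset.sum_congr rfl fun j _ => by rw [finner_comm, mul_comm]

theorem finner_sub_normalPart (i : Fin m) : finner (A i * Y) (W - normalPart A Y W) = 0 := by
  rw [finner_sub_right, finner_normalPart, sub_self]

theorem finner_normalPart_sub : finner (normalPart A Y W) (W - normalPart A Y W) = 0 := by
  set V := W - normalPart A Y W
  rw [normalPart, finner_calAstar_mul_left]
  simp only [V, finner_sub_normalPart, mul_zero, Finset.sum_const_zero]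

theorem fnorm_sq_sub_normalPart_le : fnorm (W - normalPart A Y W) ^ 2 ≤ fnorm W ^ 2 := by
  set D := normalPart A Y W
  have hW : fnorm W ^ 2 = fnorm (W - D) ^ 2 + fnorm D ^ 2 := by
    conv_lhs => rw [← sub_add_cancel W D]
    rw [fnorm_sq, fnorm_sq, fnorm_sq, finner_add_left, finner_add_right, finner_add_right,
      finner_comm (W - D) D, finner_normalPart_sub]
    ring
  nlinarith [sq_nonneg (fnorm D)]

end NormalSpace

section Curvature

variable {A : Fin m → Matrix (Fin n) (Fin n) 𝕂} {Y W : Matrix (Fin n) (Fin k) 𝕂}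
  {P : Matrix (Fin k) (Fin k) 𝕂} {K R σ : ℝ}

theorem fnorm_normalPart_coeff_le (hK0 : 0 ≤ K)
    (hK : ∀ Z, fnorm (calAstar A (pinv (gram A Y) *ᵥ calA A Z)) ≤ K * fnorm Z)
    (hWP : W * Pᴴ = W) (hYP : fnorm (Y * P) ≤ σ) :
    fnorm (calAstar A (pinv (gram A Y) *ᵥ calA A (W * Yᴴ))) ≤ K * σ * fnorm W := by
  have hWY : W * Yᴴ = W * (Y * P)ᴴ := by
    rw [Matrix.conjTranspose_mul, ← Matrix.mul_assoc, hWP]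
  calc _ ≤ K * fnorm (W * (Y * P)ᴴ) := hWY ▸ hK _
    _ ≤ K * (fnorm W * σ) := by
        gcongr
        exact (fnorm_mul_le _ _).trans (by rw [fnorm_conjTranspose]; gcongr; exact fnorm_nonneg _)
    _ = K * σ * fnorm W := by ring

theorem fnorm_normalPart_sq_le (hK0 : 0 ≤ K)
    (hK : ∀ Z, fnorm (calAstar A (pinv (gram A Y) *ᵥ calA A Z)) ≤ K * fnorm Z)
    (hYR : fnorm Y ^ 2 ≤ R) (hWP : W * Pᴴ = W) (hYP : fnorm (Y * P) ≤ σ) :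
    fnorm (normalPart A Y W) ^ 2 ≤ K ^ 2 * σ ^ 2 * R * fnorm W ^ 2 := by
  have hM := fnorm_normalPart_coeff_le hK0 hK hWP hYP
  calc fnorm (normalPart A Y W) ^ 2
      ≤ (fnorm (calAstar A (pinv (gram A Y) *ᵥ calA A (W * Yᴴ))) * fnorm Y) ^ 2 := by
        gcongr; exact fnorm_nonneg _; exact fnorm_mul_le _ _
    _ ≤ (K * σ * fnorm W) ^ 2 * R := by
        rw [mul_pow]
        gcongr
        exact fnorm_nonneg _
    _ = K ^ 2 * σ ^ 2 * R * fnorm W ^ 2 := by ring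

theorem fnorm_normalPart_mul_le (hK0 : 0 ≤ K)
    (hK : ∀ Z, fnorm (calAstar A (pinv (gram A Y) *ᵥ calA A Z)) ≤ K * fnorm Z)
    (hWP : W * Pᴴ = W) (hYP : fnorm (Y * P) ≤ σ) :
    fnorm (normalPart A Y W * P) ≤ K * σ ^ 2 * fnorm W := by
  have hσ : 0 ≤ σ := (fnorm_nonneg _).trans hYP
  calc fnorm (normalPart A Y W * P)
      ≤ fnorm (calAstar A (pinv (gram A Y) *ᵥ calA A (W * Yᴴ))) * fnorm (Y * P) := by
        rw [normalPart, Matrix.mul_assoc]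
        exact fnorm_mul_le _ _
    _ ≤ K * σ * fnorm W * σ := mul_le_mul (fnorm_normalPart_coeff_le hK0 hK hWP hYP) hYP
        (fnorm_nonneg _) (mul_nonneg (mul_nonneg hK0 hσ) (fnorm_nonneg _))
    _ = K * σ ^ 2 * fnorm W := by ring

theorem neg_mul_fnorm_sq_le_finner {S : Matrix (Fin n) (Fin n) 𝕂} {εH B : ℝ}
    (hS : S.IsHermitian) (hB : 0 ≤ B)
    (hSN : ∀ N : Matrix (Fin n) (Fin k) 𝕂, fnorm (S * N) ≤ B * fnorm N) (hεH : 0 ≤ εH)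
    (hcurv : ∀ V, (∀ i, finner (A i * Y) V = 0) → -εH * fnorm V ^ 2 ≤ finner V (S * V))
    (hK0 : 0 ≤ K) (hK : ∀ Z, fnorm (calAstar A (pinv (gram A Y) *ᵥ calA A Z)) ≤ K * fnorm Z)
    (hYR : fnorm Y ^ 2 ≤ R) (hWP : W * Pᴴ = W) (hYP : fnorm (Y * P) ≤ σ) :
    -(εH + K * σ ^ 2 * B * (2 + K * R)) * fnorm W ^ 2 ≤ finner W (S * W) := by
  set D := normalPart A Y W
  -- As `W = W * Pᴴ`, only `D * P` meets `S * W`, and it carries a second factor `σ`.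
  have hcross : -(K * σ ^ 2 * B * fnorm W ^ 2) ≤ finner D (S * W) := by
    have hDW : finner D (S * W) = finner (D * P) (S * W) := by
      rw [finner_mul_right, Matrix.mul_assoc, hWP]
    have hprod : fnorm (D * P) * fnorm (S * W) ≤ (K * σ ^ 2 * fnorm W) * (B * fnorm W) :=
      mul_le_mul (fnorm_normalPart_mul_le hK0 hK hWP hYP) (hSN W) (fnorm_nonneg _)
        (mul_nonneg (mul_nonneg hK0 (sq_nonneg σ)) (fnorm_nonneg W))
    rw [hDW]
    linarith [neg_abs_le (finner (D * P) (S * W)), abs_finner_le (D * P) (S * W)]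
  have hnormal : finner D (S * D) ≤ B * (K ^ 2 * σ ^ 2 * R * fnorm W ^ 2) :=
    calc finner D (S * D) ≤ fnorm D * (B * fnorm D) := (le_abs_self _).trans
          ((abs_finner_le _ _).trans (by gcongr; exact fnorm_nonneg _; exact hSN D))
      _ = B * fnorm D ^ 2 := by ring
      _ ≤ B * (K ^ 2 * σ ^ 2 * R * fnorm W ^ 2) := by
          gcongr
          exact fnorm_normalPart_sq_le hK0 hK hYR hWP hYP
  have htan := hcurv (W - D) (finner_sub_normalPart A Y W)
  rw [finner_sub_mul_sub hS] at htan
  linarith [mul_le_mul_of_nonneg_left (fnorm_sq_sub_normalPart_le A Y W) hεH]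

end Curvature

section Smat

variable {A : Fin m → Matrix (Fin n) (Fin n) 𝕂} {b : Fin m → ℝ} {C : Matrix (Fin n) (Fin n) 𝕂}
  {Y : Matrix (Fin n) (Fin k) 𝕂} {K R : ℝ}

theorem calAstar_isHermitian (hA : ∀ i, (A i).IsHermitian) (μ : Fin m → ℝ) :
    (calAstar A μ).IsHermitian :=
  isSelfAdjoint_sum _ fun i _ => (hA i).smul (RCLike.conj_ofReal (μ i))

theorem smat_isHermitian (hA : ∀ i, (A i).IsHermitian) (hC : C.IsHermitian)
    (Y : Matrix (Fin n) (Fin k) 𝕂) : (Smat A C Y).IsHermitian :=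
  hC.sub (calAstar_isHermitian hA _)

theorem fnorm_smat_mul_le (hK0 : 0 ≤ K)
    (hK : ∀ Z, fnorm (calAstar A (pinv (gram A Y) *ᵥ calA A Z)) ≤ K * fnorm Z)
    (hYR : fnorm Y ^ 2 ≤ R) (N : Matrix (Fin n) (Fin k) 𝕂) :
    fnorm (Smat A C Y * N) ≤ opNorm C * (1 + K * R) * fnorm N := by
  set M := calAstar A (pinv (gram A Y) *ᵥ calA A (C * (Y * Yᴴ)))
  have hYY : fnorm (Y * Yᴴ) ≤ R :=
    calc fnorm (Y * Yᴴ) ≤ fnorm Y * fnorm Yᴴ := fnorm_mul_le _ _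
      _ = fnorm Y ^ 2 := by rw [fnorm_conjTranspose, sq]
      _ ≤ R := hYR
  have hM : fnorm M ≤ K * (opNorm C * R) :=
    calc fnorm M ≤ K * fnorm (C * (Y * Yᴴ)) := hK _
      _ ≤ K * (opNorm C * R) := by
          gcongr
          exact (fnorm_mul_le_opNorm _ _).trans (by gcongr; exact opNorm_nonneg C)
  calc fnorm (Smat A C Y * N) = fnorm (C * N - M * N) := by rw [Smat, Matrix.sub_mul]
    _ ≤ fnorm (C * N) + fnorm (M * N) := fnorm_sub_le _ _
    _ ≤ opNorm C * fnorm N + K * (opNorm C * R) * fnorm N :=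
        add_le_add (fnorm_mul_le_opNorm _ _)
          ((fnorm_mul_le _ _).trans (by gcongr; exact fnorm_nonneg _))
    _ = opNorm C * (1 + K * R) * fnorm N := by ring

theorem finner_sub_eq_finner_smat_sub (hY : Y ∈ FactSet A b k) {X : Matrix (Fin n) (Fin n) 𝕂}
    (hX : X ∈ SDPSet A b) :
    finner C (Y * Yᴴ) - finner C X = finner (Smat A C Y) (Y * Yᴴ) - finner (Smat A C Y) X := by
  simp only [Smat, finner_sub_left, finner_calAstar_left, hY _, hX.2 _]
  ring

theorem finner_smat_le_of_isFOSP {εg : ℝ} (hY : IsFOSP A b C Y εg) (hYR : fnorm Y ^ 2 ≤ R) :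
    finner (Smat A C Y) (Y * Yᴴ) ≤ εg / 2 * √R := by
  have hSY : fnorm (Smat A C Y * Y) ≤ εg / 2 := by
    have := hY.2
    rw [fnorm_two_smul] at this
    linarith
  calc finner (Smat A C Y) (Y * Yᴴ) = finner (Smat A C Y * Y) Y := (finner_mul_right _ _ _).symm
    _ ≤ fnorm (Smat A C Y * Y) * fnorm Y := (le_abs_self _).trans (abs_finner_le _ _)
    _ ≤ εg / 2 * √R := mul_le_mul hSY (Real.le_sqrt_of_sq_le hYR) (fnorm_nonneg _)
        ((fnorm_nonneg _).trans hSY)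

theorem neg_mul_re_dotProduct_le_smat (hk : 0 < k) (hA : ∀ i, (A i).IsHermitian)
    (hC : C.IsHermitian) {εg εH : ℝ} (hY : IsSOSP A b C Y εg εH) (hεH : 0 ≤ εH) (hK0 : 0 ≤ K)
    (hK : ∀ Z, fnorm (calAstar A (pinv (gram A Y) *ᵥ calA A Z)) ≤ K * fnorm Z)
    (hYR : fnorm Y ^ 2 ≤ R) (x : Fin n → 𝕂) :
    -(εH + K * (2 + K * R) ^ 2 * opNorm C * sigmaLast Y ^ 2) * RCLike.re (star x ⬝ᵥ x) ≤
      RCLike.re (star x ⬝ᵥ Smat A C Y *ᵥ x) := by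
  obtain ⟨z, hz, hYz⟩ := exists_fnorm_mul_vecMulVec_eq_sigmaLast hk Y
  have hKR : 0 ≤ K * R := mul_nonneg hK0 ((sq_nonneg _).trans hYR)
  have hWP : Matrix.vecMulVec x (star z) * (Matrix.vecMulVec z (star z))ᴴ =
      Matrix.vecMulVec x (star z) := by
    rw [Matrix.conjTranspose_vecMulVec, star_star, Matrix.vecMulVec_mul_vecMulVec, hz, one_smul]
  have hcurv := neg_mul_fnorm_sq_le_finner (smat_isHermitian hA hC Y)
    (mul_nonneg (opNorm_nonneg C) (by linarith)) (fnorm_smat_mul_le hK0 hK hYR) hεH hY.2 hK0 hK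
    hYR hWP hYz.le
  have hc : K * sigmaLast Y ^ 2 * (opNorm C * (1 + K * R)) * (2 + K * R) ≤
      K * (2 + K * R) ^ 2 * opNorm C * sigmaLast Y ^ 2 := by
    have := mul_nonneg (mul_nonneg (mul_nonneg hK0 (sq_nonneg (sigmaLast Y))) (opNorm_nonneg C))
      (by linarith : (0 : ℝ) ≤ 2 + K * R)
    linarith
  have := (mul_le_mul_of_nonneg_right (neg_le_neg (add_le_add le_rfl hc)) (sq_nonneg _)).trans
    hcurv
  rwa [fnorm_sq, Matrix.mul_vecMulVec, finner_vecMulVec_star hz, finner_vecMulVec_star hz] at this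

end Smat

theorem deterministic_optimality_gap_general
    {𝕂 : Type*} [RCLike 𝕂] {n m k : ℕ} (hn : 0 < n) (hk : 0 < k)
    (A : Fin m → Matrix (Fin n) (Fin n) 𝕂) (hA : ∀ i, (A i).IsHermitian)
    (b : Fin m → ℝ)
    (R K : ℝ)
    (hR : ∀ X ∈ SDPSet A b, RCLike.re (Matrix.trace X) ≤ R)
    (hK : ∀ Y ∈ FactSet A b k, ∀ Z : Matrix (Fin n) (Fin n) 𝕂,
      fnorm (calAstar A (pinv (gram A Y) *ᵥ calA A Z)) ≤ K * fnorm Z)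
    (C : Matrix (Fin n) (Fin n) 𝕂) (hC : C.IsHermitian)
    (εg εH : ℝ) (hεH : 0 ≤ εH)
    (Y : Matrix (Fin n) (Fin k) 𝕂) (hY : IsSOSP A b C Y εg εH) :
    0 ≤ finner (C * Y) Y - sInf ((fun X => finner C X) '' SDPSet A b) ∧
    finner (C * Y) Y - sInf ((fun X => finner C X) '' SDPSet A b) ≤
      (εH + K * (2 + K * R) ^ 2 * opNorm C * sigmaLast Y ^ 2) * R +
        εg / 2 * Real.sqrt R := by
  have hYmem : Y ∈ FactSet A b k := hY.1.1
  have hYY : Y * Yᴴ ∈ SDPSet A b := ⟨Matrix.posSemidef_self_mul_conjTranspose Y, hYmem⟩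
  have hYR : fnorm Y ^ 2 ≤ R := (fnorm_sq_eq_re_trace Y).trans_le (hR _ hYY)
  have hK0 : 0 ≤ K := by
    have : Nonempty (Fin n) := ⟨⟨0, hn⟩⟩
    exact (mul_nonneg_iff_of_pos_right (fnorm_pos one_ne_zero)).mp
      ((fnorm_nonneg _).trans (hK Y hYmem 1))
  set c := εH + K * (2 + K * R) ^ 2 * opNorm C * sigmaLast Y ^ 2
  have hc : 0 ≤ c := add_nonneg hεH
    (mul_nonneg (mul_nonneg (mul_nonneg hK0 (sq_nonneg _)) (opNorm_nonneg C)) (sq_nonneg _))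
  have hgap : ∀ y ∈ (fun X => finner C X) '' SDPSet A b,
      finner C (Y * Yᴴ) - (c * R + εg / 2 * √R) ≤ y := by
    rintro _ ⟨X, hX, rfl⟩
    have hSX := mul_re_trace_le_finner (smat_isHermitian hA hC Y)
      (neg_mul_re_dotProduct_le_smat hk hA hC hY hεH hK0 (hK Y hYmem) hYR) hX.1
    have := finner_sub_eq_finner_smat_sub (C := C) hYmem hX
    nlinarith [finner_smat_le_of_isFOSP hY.1 hYR, hR X hX]
  rw [finner_mul_right]
  exact ⟨by linarith [csInf_le ⟨_, hgap⟩ ⟨Y * Yᴴ, hYY, rfl⟩],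
    by linarith [le_csInf ((Set.nonempty_of_mem hYY).image _) hgap]⟩

/-- deterministic optimality gap at any `(εg, εH)`-SOSP. -/
theorem deterministic_optimality_gap
    {𝕂 : Type*} [RCLike 𝕂] {n m k : ℕ} (hn : 0 < n) (hm : 0 < m) (hk : 0 < k)
    (A : Fin m → Matrix (Fin n) (Fin n) 𝕂) (hA : ∀ i, (A i).IsHermitian)
    (b : Fin m → ℝ)
    (hCne : (SDPSet A b).Nonempty) (hCcpt : IsCompact (SDPSet A b))
    (R K : ℝ)
    (hR : ∀ X ∈ SDPSet A b, RCLike.re (Matrix.trace X) ≤ R)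
    (hK : ∀ Y ∈ FactSet A b k, ∀ Z : Matrix (Fin n) (Fin n) 𝕂,
      fnorm (calAstar A (pinv (gram A Y) *ᵥ calA A Z)) ≤ K * fnorm Z)
    (C : Matrix (Fin n) (Fin n) 𝕂) (hC : C.IsHermitian)
    (εg εH : ℝ) (hεg : 0 ≤ εg) (hεH : 0 ≤ εH)
    (Y : Matrix (Fin n) (Fin k) 𝕂) (hY : IsSOSP A b C Y εg εH) :
    0 ≤ finner (C * Y) Y - sInf ((fun X => finner C X) '' SDPSet A b) ∧
    finner (C * Y) Y - sInf ((fun X => finner C X) '' SDPSet A b) ≤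
      (εH + K * (2 + K * R) ^ 2 * opNorm C * sigmaLast Y ^ 2) * R +
        εg / 2 * Real.sqrt R :=
  deterministic_optimality_gap_general hn hk A hA b R K hR hK C hC εg εH hεH Y hY

end SmoothedBM
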